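/- Let W be a continuous distance monoid, κ an infinite ordinal, T a κ-tree, and α : κ → W⁺ an initial sequence with 2·α(i+1) ≤ α(i) for all i < κ. Then T_α = (T ∪ Paths(T), d_{T,α}) is a Cauchy complete W-metric space, and T is a dense subset of it: every element of T ∪ Paths(T) is the limit of some Cauchy sequence with range contained in T. -/

import Mathlib

/-- A complete distance monoid: a commutative positively linearly ordered monoid whose
order is a complete linear order with least element `0`, and in which addition
distributes over infima. -/
class CompleteDistMonoid (W : Type*) extends AddCommMonoid W, CompleteLinearOrder W where
  bot_eq_zero : (⊥ : W) = 0
  add_le_add_left : ∀ a b : W, a ≤ b → ∀ c : W, c + a ≤ c + b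
  add_le_add_right : ∀ a b : W, a ≤ b → ∀ c : W, a + c ≤ b + c
  add_sInf : ∀ (A : Set W) (b : W), b + sInf A = ⨅ a ∈ A, (a + b)

/-- `W` is continuous at `0` if `0 = inf {a + b | a, b ∈ W⁺}` (where `W⁺ = W \ {0}`). -/
def ContinuousAtZero (W : Type*) [CompleteDistMonoid W] : Prop :=
  sInf {c : W | ∃ a b : W, a ≠ 0 ∧ b ≠ 0 ∧ c = a + b} = 0

/-- An initial sequence in `W` with domain the ordinal `δ`: an order-reversing map into
`W⁺ = W \ {0}` that is coinitial in `W⁺`. -/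
def IsInitialSeq {W : Type*} [Zero W] [Preorder W] (δ : Ordinal) (s : Ordinal → W) : Prop :=
  (∀ i, i < δ → s i ≠ 0) ∧
  (∀ i j : Ordinal, i ≤ j → j < δ → s j ≤ s i) ∧
  ∀ a : W, a ≠ 0 → ∃ β, β < δ ∧ s β ≤ a

/-- The coinitiality of `W`: the least ordinal that is the domain of an initial sequence. -/
noncomputable def coinit (W : Type*) [Zero W] [Preorder W] : Ordinal :=
  sInf {δ : Ordinal | ∃ s : Ordinal → W, IsInitialSeq δ s}

/-- `d` is a `W`-metric on `M`. -/
def IsWMetric {W M : Type*} [CompleteDistMonoid W] (d : M → M → W) : Prop :=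
  (∀ x y : M, max (d x y) (d y x) = 0 ↔ x = y) ∧
  ∀ x y z : M, d x z ≤ d x y + d y z

/-- `p : A → M` is a Cauchy sequence on `(M, d)`: `A ⊆ W⁺`, `inf {a + b | a, b ∈ A} = 0`
and `d (p a) (p b) ≤ a + b`.  (Values of `p` outside `A` are irrelevant.) -/
def IsCauchySeqOn {W M : Type*} [CompleteDistMonoid W] (d : M → M → W)
    (A : Set W) (p : W → M) : Prop :=
  (∀ a ∈ A, a ≠ 0) ∧
  sInf {c : W | ∃ a ∈ A, ∃ b ∈ A, c = a + b} = 0 ∧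
  ∀ a ∈ A, ∀ b ∈ A, d (p a) (p b) ≤ a + b

/-- The Cauchy sequence `p : A → M` converges to `x`. -/
def ConvergesTo {W M : Type*} [CompleteDistMonoid W] (d : M → M → W)
    (A : Set W) (p : W → M) (x : M) : Prop :=
  (⨆ a ∈ {a : W | a ≠ 0}, ⨅ b ∈ {b ∈ A | b ≤ a}, d x (p b)) = 0 ∧
  (⨆ a ∈ {a : W | a ≠ 0}, ⨅ b ∈ {b ∈ A | b ≤ a}, d (p b) x) = 0

/-- `(M, d)` is Cauchy complete: every Cauchy sequence converges to some element. -/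
def CauchyComplete {W M : Type*} [CompleteDistMonoid W] (d : M → M → W) : Prop :=
  ∀ (A : Set W) (p : W → M), IsCauchySeqOn d A p → ∃ x : M, ConvergesTo d A p x

/-- The distance `d_C` between two Cauchy sequences. -/
noncomputable def dC {W M : Type*} [CompleteDistMonoid W] (d : M → M → W)
    (A : Set W) (p : W → M) (B : Set W) (q : W → M) : W :=
  ⨆ c ∈ {c : W | c ≠ 0}, ⨅ a ∈ {a ∈ A | a ≤ c}, ⨅ b ∈ {b ∈ B | b ≤ c}, d (p a) (q b)

/-- Equivalence of Cauchy sequences: `p ≡ q` iff `d_C(p,q) = 0` and `d_C(q,p) = 0`. -/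
def CEquiv {W M : Type*} [CompleteDistMonoid W] (d : M → M → W)
    (A : Set W) (p : W → M) (B : Set W) (q : W → M) : Prop :=
  dC d A p B q = 0 ∧ dC d B q A p = 0

/-- `T` (with level function `lev`) is a `κ`-tree: a partial order with a unique minimal
element in which the set of predecessors of any element is a chain mapped
order-isomorphically by `lev` onto an ordinal below `κ` (its order type). -/
structure IsTree {T : Type*} [PartialOrder T] (κ : Ordinal) (lev : T → Ordinal) : Prop where
  root : ∃! r : T, IsMin r
  chainBelow : ∀ a b c : T, b < a → c < a → b < c ∨ b = c ∨ c < b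
  lev_lt : ∀ a : T, lev a < κ
  lev_strictMono : ∀ a b : T, a < b → lev a < lev b
  lev_surjOn : ∀ a : T, ∀ i, i < lev a → ∃ b, b < a ∧ lev b = i

/-- A `κ`-tree is pruned if every element has extensions to all higher levels below `κ`. -/
def IsPruned {T : Type*} [PartialOrder T] (κ : Ordinal) (lev : T → Ordinal) : Prop :=
  ∀ a : T, ∀ β, β < κ → lev a < β → ∃ b : T, a ≤ b ∧ lev b = β

/-- A path through a `κ`-tree: a strictly increasing selection of one node of each
level `γ < κ`. -/
def IsPath {T : Type*} [PartialOrder T] (κ : Ordinal) (lev : T → Ordinal)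
    (p : {γ : Ordinal // γ < κ} → T) : Prop :=
  (∀ γ, lev (p γ) = γ.1) ∧ ∀ γ δ : {γ : Ordinal // γ < κ}, γ < δ → p γ < p δ

/-- The set of paths through the tree. -/
def PathT {T : Type*} [PartialOrder T] (κ : Ordinal) (lev : T → Ordinal) :=
  {p : {γ : Ordinal // γ < κ} → T // IsPath κ lev p}

/-- `c ∈ T` lies below a point of `T ∪ Paths(T)`. -/
def BelowX {T : Type*} [PartialOrder T] (κ : Ordinal) (lev : T → Ordinal)
    (c : T) : T ⊕ PathT κ lev → Prop
  | .inl t => c ≤ t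
  | .inr p => ∃ γ, p.1 γ = c

/-- `join(u, v)`: the supremum of the levels of common lower bounds in `T`. -/
noncomputable def joinX {T : Type*} [PartialOrder T] (κ : Ordinal) (lev : T → Ordinal)
    (u v : T ⊕ PathT κ lev) : Ordinal :=
  sSup (lev '' {c : T | BelowX κ lev c u ∧ BelowX κ lev c v})

open Classical in
/-- The distance `d_{T,α}` on `T ∪ Paths(T)`:  `α (join u v)` for `u ≠ v`, and `0` on the
diagonal. -/
noncomputable def dTree {W T : Type*} [CompleteDistMonoid W] [PartialOrder T]
    (κ : Ordinal) (lev : T → Ordinal) (α : Ordinal → W)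
    (u v : T ⊕ PathT κ lev) : W :=
  if u = v then 0 else α (joinX κ lev u v)

/-!
The distance `d_{T,α}` is an ultrametric: a common lower bound of `u, v` and one of `v, w` are
comparable (both lie below `v`), and the lower of the two lies below `u` and `w`; hence
`join(u, w) ≥ min (join(u, v), join(v, w))`, and `α` is antitone.

If two points are at distance `< α γ`, they share their node of level `γ`. So a Cauchy sequence
that is not eventually constant has, for every `γ < κ`, a node `t γ` of level `γ` lying below all
of its late terms; the nodes `t γ` form a path, which is the limit of the sequence. Every path is
the limit of its own nodes, which gives the density of `T`.
-/

namespace CompleteDistMonoid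

variable {W : Type*} [CompleteDistMonoid W]

instance : IsOrderedAddMonoid W where
  add_le_add_left := CompleteDistMonoid.add_le_add_right

protected theorem zero_le (a : W) : 0 ≤ a :=
  bot_eq_zero (W := W) ▸ bot_le

protected theorem pos_of_ne_zero {a : W} (ha : a ≠ 0) : 0 < a :=
  (CompleteDistMonoid.zero_le a).lt_of_ne' ha

protected theorem le_add_right (a b : W) : a ≤ a + b :=
  le_add_of_nonneg_right (CompleteDistMonoid.zero_le b)

protected theorem le_add_left (a b : W) : a ≤ b + a :=
  le_add_of_nonneg_left (CompleteDistMonoid.zero_le b)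

protected theorem min_ne_zero {a b : W} (ha : a ≠ 0) (hb : b ≠ 0) : min a b ≠ 0 :=
  (lt_min (CompleteDistMonoid.pos_of_ne_zero ha) (CompleteDistMonoid.pos_of_ne_zero hb)).ne'

end CompleteDistMonoid

section WMetric

variable {W M : Type*} [CompleteDistMonoid W]

theorem ContinuousAtZero.eq_zero_of_forall_le (hW : ContinuousAtZero W) {x : W}
    (h : ∀ c, c ≠ 0 → x ≤ c) : x = 0 := by
  by_contra hx
  rw [ContinuousAtZero] at hW
  obtain ⟨_, ⟨a, b, ha, -, rfl⟩, hlt⟩ :=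
    sInf_lt_iff.1 (hW ▸ CompleteDistMonoid.pos_of_ne_zero hx)
  exact ((h a ha).trans (CompleteDistMonoid.le_add_right a b)).not_gt hlt

theorem IsCauchySeqOn.exists_add_lt {d : M → M → W} {A : Set W} {p : W → M}
    (hp : IsCauchySeqOn d A p) {c : W} (hc : c ≠ 0) : ∃ a ∈ A, ∃ b ∈ A, a + b < c := by
  obtain ⟨_, ⟨a, ha, b, hb, rfl⟩, hlt⟩ :=
    sInf_lt_iff.1 (hp.2.1 ▸ CompleteDistMonoid.pos_of_ne_zero hc)
  exact ⟨a, ha, b, hb, hlt⟩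

theorem IsCauchySeqOn.exists_mem_le {d : M → M → W} {A : Set W} {p : W → M}
    (hp : IsCauchySeqOn d A p) : ∀ c, c ≠ 0 → ∃ a ∈ A, a ≤ c := by
  intro c hc
  obtain ⟨a, ha, b, -, hlt⟩ := hp.exists_add_lt hc
  exact ⟨a, ha, (CompleteDistMonoid.le_add_right a b).trans hlt.le⟩

theorem convergesTo_of_eventually_le (hW : ContinuousAtZero W) {d : M → M → W} {A : Set W}
    {p : W → M} {x : M} (hA : ∀ c, c ≠ 0 → ∃ a ∈ A, a ≤ c)
    (h : ∀ c, c ≠ 0 → ∃ ε, ε ≠ 0 ∧ ∀ b ∈ A, b ≤ ε → d x (p b) ≤ c ∧ d (p b) x ≤ c) :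
    ConvergesTo d A p x := by
  have hclose : ∀ a, a ≠ 0 → ∀ c, c ≠ 0 →
      ∃ b ∈ A, b ≤ a ∧ d x (p b) ≤ c ∧ d (p b) x ≤ c := by
    intro a ha c hc
    obtain ⟨ε, hε, hεc⟩ := h c hc
    obtain ⟨b, hb, hble⟩ := hA _ (CompleteDistMonoid.min_ne_zero ha hε)
    exact ⟨b, hb, hble.trans (min_le_left _ _), hεc b hb (hble.trans (min_le_right _ _))⟩
  constructor
  · refine hW.eq_zero_of_forall_le fun c hc => iSup₂_le fun a ha => ?_
    obtain ⟨b, hb, hba, hxb, -⟩ := hclose a ha c hc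
    exact (iInf₂_le b ⟨hb, hba⟩).trans hxb
  · refine hW.eq_zero_of_forall_le fun c hc => iSup₂_le fun a ha => ?_
    obtain ⟨b, hb, hba, -, hbx⟩ := hclose a ha c hc
    exact (iInf₂_le b ⟨hb, hba⟩).trans hbx

theorem exists_isCauchySeqOn_convergesTo_of_adherent (hW : ContinuousAtZero W)
    {d : M → M → W} (hd : IsWMetric d) {S : Set M} {x : M}
    (h : ∀ c, c ≠ 0 → ∃ y ∈ S, d x y ≤ c ∧ d y x ≤ c) :
    ∃ (A : Set W) (p : W → M),
      IsCauchySeqOn d A p ∧ (∀ a ∈ A, p a ∈ S) ∧ ConvergesTo d A p x := by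
  have hchoice : ∀ c : W, ∃ y : M, c ≠ 0 → y ∈ S ∧ d x y ≤ c ∧ d y x ≤ c := fun c => by
    by_cases hc : c = 0
    · exact ⟨x, absurd hc⟩
    · obtain ⟨y, hy⟩ := h c hc
      exact ⟨y, fun _ => hy⟩
  choose p hp using hchoice
  have hcauchy : IsCauchySeqOn d {c | c ≠ 0} p := by
    refine ⟨fun a ha => ha, ?_, fun a ha b hb => ?_⟩
    · simpa only [ContinuousAtZero, Set.mem_ofPred_eq, exists_and_left] using hW
    · exact (hd.2 _ x _).trans (add_le_add (hp a ha).2.2 (hp b hb).2.1)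
  refine ⟨{c | c ≠ 0}, p, hcauchy, fun a ha => (hp a ha).1, ?_⟩
  exact convergesTo_of_eventually_le hW (fun c hc => ⟨c, hc, le_rfl⟩) fun c hc =>
    ⟨c, hc, fun b hb hbc => ⟨(hp b hb).2.1.trans hbc, (hp b hb).2.2.trans hbc⟩⟩

end WMetric

section Tree

variable {T : Type*} [PartialOrder T] {κ : Ordinal} {lev : T → Ordinal}

theorem IsTree.lev_mono (ht : IsTree κ lev) {a b : T} (h : a ≤ b) : lev a ≤ lev b :=
  h.eq_or_lt.elim (fun h => h ▸ le_rfl) fun h => (ht.lev_strictMono a b h).le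

theorem IsTree.eq_of_le_of_lev_eq (ht : IsTree κ lev) {a b : T} (h : a ≤ b)
    (hl : lev a = lev b) : a = b :=
  h.eq_of_not_lt fun hlt => (ht.lev_strictMono a b hlt).ne hl

theorem IsTree.le_total_of_le (ht : IsTree κ lev) {a b c : T} (hb : b ≤ a) (hc : c ≤ a) :
    b ≤ c ∨ c ≤ b := by
  rcases hb.eq_or_lt with rfl | hb
  · exact .inr hc
  rcases hc.eq_or_lt with rfl | hc
  · exact .inl hb.le
  rcases ht.chainBelow a b c hb hc with h | h | h
  exacts [.inl h.le, .inl h.le, .inr h.le]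

theorem IsPath.strictMono {q : {γ : Ordinal // γ < κ} → T} (hq : IsPath κ lev q) :
    StrictMono q :=
  fun γ δ h => hq.2 γ δ h

theorem belowX_inl_self (t : T) : BelowX κ lev t (.inl t) :=
  le_rfl

theorem belowX_inr_apply (q : PathT κ lev) (γ : {γ : Ordinal // γ < κ}) :
    BelowX κ lev (q.1 γ) (.inr q) :=
  ⟨γ, rfl⟩

theorem BelowX.path_le {c : T} {q : PathT κ lev} (hc : BelowX κ lev c (.inr q))
    {γ : {γ : Ordinal // γ < κ}} (hγ : γ.1 ≤ lev c) : q.1 γ ≤ c := by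
  obtain ⟨δ, rfl⟩ := hc
  exact q.2.strictMono.monotone (Subtype.mk_le_mk.2 (q.2.1 δ ▸ hγ))

theorem BelowX.total (ht : IsTree κ lev) {c c' : T} {u : T ⊕ PathT κ lev}
    (hc : BelowX κ lev c u) (hc' : BelowX κ lev c' u) : c ≤ c' ∨ c' ≤ c := by
  cases u with
  | inl t => exact ht.le_total_of_le hc hc'
  | inr q =>
    obtain ⟨γ, rfl⟩ := hc
    obtain ⟨δ, rfl⟩ := hc'
    exact (le_total γ δ).imp (q.2.strictMono.monotone ·) (q.2.strictMono.monotone ·)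

theorem BelowX.eq_of_lev_eq (ht : IsTree κ lev) {c c' : T} {u : T ⊕ PathT κ lev}
    (hc : BelowX κ lev c u) (hc' : BelowX κ lev c' u) (hl : lev c = lev c') : c = c' :=
  (hc.total ht hc').elim (ht.eq_of_le_of_lev_eq · hl) fun h =>
    (ht.eq_of_le_of_lev_eq h hl.symm).symm

theorem BelowX.of_le (ht : IsTree κ lev) {c c' : T} {u : T ⊕ PathT κ lev}
    (hc : BelowX κ lev c u) (h : c' ≤ c) : BelowX κ lev c' u := by
  cases u with
  | inl t => exact h.trans hc
  | inr q =>
    exact ⟨⟨lev c', ht.lev_lt c'⟩,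
      BelowX.eq_of_lev_eq ht (u := .inl c) (hc.path_le (ht.lev_mono h)) h (q.2.1 _)⟩

theorem joinX_comm (u v : T ⊕ PathT κ lev) : joinX κ lev u v = joinX κ lev v u := by
  simp only [joinX, and_comm]

theorem le_joinX (ht : IsTree κ lev) {c : T} {u v : T ⊕ PathT κ lev} (hu : BelowX κ lev c u)
    (hv : BelowX κ lev c v) : lev c ≤ joinX κ lev u v :=
  le_csSup ⟨κ, by rintro _ ⟨c, -, rfl⟩; exact (ht.lev_lt c).le⟩ ⟨c, ⟨hu, hv⟩, rfl⟩

theorem joinX_le {u v : T ⊕ PathT κ lev} {γ : Ordinal}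
    (h : ∀ c, BelowX κ lev c u → BelowX κ lev c v → lev c ≤ γ) : joinX κ lev u v ≤ γ :=
  csSup_le' (by rintro _ ⟨c, ⟨hu, hv⟩, rfl⟩; exact h c hu hv)

theorem exists_belowX_of_lt_joinX (ht : IsTree κ lev) {u v : T ⊕ PathT κ lev} {γ : Ordinal}
    (h : γ < joinX κ lev u v) : ∃ t, lev t = γ ∧ BelowX κ lev t u ∧ BelowX κ lev t v := by
  obtain ⟨_, ⟨c, ⟨hu, hv⟩, rfl⟩, hγc⟩ := exists_lt_of_lt_csSup' h
  obtain ⟨t, htc, rfl⟩ := ht.lev_surjOn c γ hγc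
  exact ⟨t, rfl, hu.of_le ht htc.le, hv.of_le ht htc.le⟩

theorem joinX_lt (ht : IsTree κ lev) {u v : T ⊕ PathT κ lev} (h : u ≠ v) :
    joinX κ lev u v < κ := by
  suffices ∃ t : T, ∀ c, BelowX κ lev c u → BelowX κ lev c v → lev c ≤ lev t by
    obtain ⟨t, hbound⟩ := this
    exact (joinX_le hbound).trans_lt (ht.lev_lt t)
  cases u with
  | inl t => exact ⟨t, fun c hc _ => ht.lev_mono hc⟩
  | inr p =>
    cases v with
    | inl t => exact ⟨t, fun c _ hc => ht.lev_mono hc⟩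
    | inr q =>
      obtain ⟨γ, hγ⟩ : ∃ γ, p.1 γ ≠ q.1 γ :=
        Function.ne_iff.1 fun h' => h (congrArg _ (Subtype.ext h'))
      refine ⟨p.1 γ, fun c hp hq => ?_⟩
      rw [p.2.1]
      by_contra! hlt
      exact hγ (BelowX.eq_of_lev_eq ht (u := .inl c) (hp.path_le hlt.le) (hq.path_le hlt.le)
        (by rw [p.2.1, q.2.1]))

theorem min_joinX_le (ht : IsTree κ lev) (u v w : T ⊕ PathT κ lev) :
    min (joinX κ lev u v) (joinX κ lev v w) ≤ joinX κ lev u w := by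
  by_contra! h
  rw [lt_min_iff] at h
  obtain ⟨_, ⟨c, ⟨hcu, hcv⟩, rfl⟩, hc⟩ := exists_lt_of_lt_csSup' h.1
  obtain ⟨_, ⟨c', ⟨hc'v, hc'w⟩, rfl⟩, hc'⟩ := exists_lt_of_lt_csSup' h.2
  rcases hcv.total ht hc'v with hle | hle
  · exact (le_joinX ht hcu (hc'w.of_le ht hle)).not_gt hc
  · exact (le_joinX ht (hcu.of_le ht hle) hc'w).not_gt hc'

end Tree

section TreeMetric

variable {W T : Type*} [CompleteDistMonoid W] [PartialOrder T] {κ : Ordinal} {lev : T → Ordinal}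
  {α : Ordinal → W}

theorem dTree_self (u : T ⊕ PathT κ lev) : dTree κ lev α u u = 0 :=
  if_pos rfl

theorem dTree_of_ne {u v : T ⊕ PathT κ lev} (h : u ≠ v) :
    dTree κ lev α u v = α (joinX κ lev u v) :=
  if_neg h

theorem dTree_comm (u v : T ⊕ PathT κ lev) : dTree κ lev α u v = dTree κ lev α v u := by
  by_cases h : u = v
  · rw [h]
  · rw [dTree_of_ne h, dTree_of_ne (Ne.symm h), joinX_comm]

theorem dTree_le_of_belowX (ht : IsTree κ lev) (hα : IsInitialSeq κ α) {t : T}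
    {u v : T ⊕ PathT κ lev} (hu : BelowX κ lev t u) (hv : BelowX κ lev t v) :
    dTree κ lev α u v ≤ α (lev t) := by
  by_cases h : u = v
  · rw [h, dTree_self]
    exact CompleteDistMonoid.zero_le _
  · rw [dTree_of_ne h]
    exact hα.2.1 _ _ (le_joinX ht hu hv) (joinX_lt ht h)

theorem lt_joinX_of_dTree_lt (hα : IsInitialSeq κ α) {u v : T ⊕ PathT κ lev} (huv : u ≠ v)
    {γ : Ordinal} (hγ : γ < κ) (h : dTree κ lev α u v < α γ) : γ < joinX κ lev u v := by
  by_contra! hj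
  rw [dTree_of_ne huv] at h
  exact (hα.2.1 _ _ hj hγ).not_gt h

theorem BelowX.of_dTree_lt (ht : IsTree κ lev) (hα : IsInitialSeq κ α) {t : T}
    {u v : T ⊕ PathT κ lev} (hu : BelowX κ lev t u) (h : dTree κ lev α u v < α (lev t)) :
    BelowX κ lev t v := by
  by_cases huv : u = v
  · exact huv ▸ hu
  obtain ⟨t', ht'l, ht'u, ht'v⟩ :=
    exists_belowX_of_lt_joinX ht (lt_joinX_of_dTree_lt hα huv (ht.lev_lt t) h)
  rwa [ht'u.eq_of_lev_eq ht hu ht'l] at ht'v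

theorem dTree_le_max (ht : IsTree κ lev) (hα : IsInitialSeq κ α) (u v w : T ⊕ PathT κ lev) :
    dTree κ lev α u w ≤ max (dTree κ lev α u v) (dTree κ lev α v w) := by
  by_cases huw : u = w
  · rw [huw, dTree_self]
    exact CompleteDistMonoid.zero_le _
  by_cases huv : u = v
  · rw [huv]
    exact le_max_right _ _
  by_cases hvw : v = w
  · rw [hvw]
    exact le_max_left _ _
  have hmin := min_joinX_le ht u v w
  rw [dTree_of_ne huw, dTree_of_ne huv, dTree_of_ne hvw]
  rcases le_total (joinX κ lev u v) (joinX κ lev v w) with h | h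
  · rw [min_eq_left h] at hmin
    exact (hα.2.1 _ _ hmin (joinX_lt ht huw)).trans (le_max_left _ _)
  · rw [min_eq_right h] at hmin
    exact (hα.2.1 _ _ hmin (joinX_lt ht huw)).trans (le_max_right _ _)

theorem dTree_isWMetric (ht : IsTree κ lev) (hα : IsInitialSeq κ α) :
    IsWMetric (dTree κ lev α) := by
  refine ⟨fun u v => ⟨fun h => ?_, ?_⟩, fun u v w => (dTree_le_max ht hα u v w).trans
    (max_le (CompleteDistMonoid.le_add_right _ _) (CompleteDistMonoid.le_add_left _ _))⟩
  · by_contra huv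
    have hd : dTree κ lev α u v = 0 :=
      le_antisymm ((le_max_left _ _).trans h.le) (CompleteDistMonoid.zero_le _)
    rw [dTree_of_ne huv] at hd
    exact hα.1 _ (joinX_lt ht huv) hd
  · rintro rfl
    rw [dTree_self, max_self]

theorem exists_belowX_eventually (ht : IsTree κ lev) (hα : IsInitialSeq κ α) {A : Set W}
    {p : W → T ⊕ PathT κ lev} (hp : IsCauchySeqOn (dTree κ lev α) A p)
    (hnconst : ∀ x ε, ε ≠ 0 → ∃ a ∈ A, a ≤ ε ∧ p a ≠ x) {γ : Ordinal} (hγ : γ < κ) :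
    ∃ t, lev t = γ ∧ ∃ ε, ε ≠ 0 ∧ ∀ a ∈ A, a ≤ ε → BelowX κ lev t (p a) := by
  obtain ⟨a₀, ha₀, b₀, hb₀, hlt⟩ := hp.exists_add_lt (hα.1 γ hγ)
  have hnear : ∀ a ∈ A, a ≤ b₀ → dTree κ lev α (p a₀) (p a) < α γ := fun a ha hab =>
    (hp.2.2 a₀ ha₀ a ha).trans_lt ((add_le_add le_rfl hab).trans_lt hlt)
  obtain ⟨a₁, ha₁, ha₁b, hne⟩ := hnconst (p a₀) b₀ (hp.1 b₀ hb₀)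
  obtain ⟨t, rfl, ht₀, -⟩ :=
    exists_belowX_of_lt_joinX ht (lt_joinX_of_dTree_lt hα hne.symm hγ (hnear a₁ ha₁ ha₁b))
  exact ⟨t, rfl, b₀, hp.1 b₀ hb₀, fun a ha hab => ht₀.of_dTree_lt ht hα (hnear a ha hab)⟩

theorem isPath_of_belowX (ht : IsTree κ lev) {t : {γ : Ordinal // γ < κ} → T}
    (hlev : ∀ γ, lev (t γ) = γ.1)
    (hcommon : ∀ γ δ, ∃ u, BelowX κ lev (t γ) u ∧ BelowX κ lev (t δ) u) : IsPath κ lev t := by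
  refine ⟨hlev, fun γ δ hγδ => ?_⟩
  obtain ⟨u, hγ, hδ⟩ := hcommon γ δ
  have hl : lev (t γ) < lev (t δ) := by rw [hlev, hlev]; exact hγδ
  rcases hγ.total ht hδ with h | h
  · exact h.lt_of_ne fun he => hl.ne (congrArg lev he)
  · exact absurd (ht.lev_mono h) hl.not_ge

theorem dTree_cauchyComplete (hW : ContinuousAtZero W) (ht : IsTree κ lev)
    (hα : IsInitialSeq κ α) : CauchyComplete (dTree κ lev α) := by
  intro A p hp
  by_cases hconst : ∃ x ε, ε ≠ 0 ∧ ∀ a ∈ A, a ≤ ε → p a = x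
  · obtain ⟨x, ε, hε, hx⟩ := hconst
    refine ⟨x, convergesTo_of_eventually_le hW hp.exists_mem_le fun c _ => ⟨ε, hε, ?_⟩⟩
    intro b hb hbε
    rw [hx b hb hbε, dTree_self]
    exact ⟨CompleteDistMonoid.zero_le c, CompleteDistMonoid.zero_le c⟩
  push Not at hconst
  choose t hlev ε hε hbelow using
    fun γ : {γ : Ordinal // γ < κ} => exists_belowX_eventually ht hα hp hconst γ.2
  have hpath : IsPath κ lev t := isPath_of_belowX ht hlev fun γ δ => by
    obtain ⟨a, ha, hle⟩ := hp.exists_mem_le _ (CompleteDistMonoid.min_ne_zero (hε γ) (hε δ))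
    exact ⟨p a, hbelow γ a ha (hle.trans (min_le_left _ _)),
      hbelow δ a ha (hle.trans (min_le_right _ _))⟩
  refine ⟨.inr ⟨t, hpath⟩, convergesTo_of_eventually_le hW hp.exists_mem_le fun c hc => ?_⟩
  obtain ⟨β, hβ, hαβ⟩ := hα.2.2 c hc
  refine ⟨ε ⟨β, hβ⟩, hε _, fun b hb hbε => ?_⟩
  have hd :=
    dTree_le_of_belowX ht hα (belowX_inr_apply ⟨t, hpath⟩ ⟨β, hβ⟩) (hbelow _ b hb hbε)
  rw [hlev] at hd
  exact ⟨hd.trans hαβ, dTree_comm (α := α) (p b) _ ▸ hd.trans hαβ⟩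

theorem exists_inl_dTree_le (ht : IsTree κ lev) (hα : IsInitialSeq κ α) (u : T ⊕ PathT κ lev)
    {c : W} (hc : c ≠ 0) :
    ∃ t : T, dTree κ lev α u (.inl t) ≤ c ∧ dTree κ lev α (.inl t) u ≤ c := by
  cases u with
  | inl t =>
    refine ⟨t, ?_⟩
    rw [dTree_self]
    exact ⟨CompleteDistMonoid.zero_le c, CompleteDistMonoid.zero_le c⟩
  | inr q =>
    obtain ⟨β, hβ, hαβ⟩ := hα.2.2 c hc
    have hd :=
      dTree_le_of_belowX ht hα (belowX_inr_apply q ⟨β, hβ⟩) (belowX_inl_self (q.1 ⟨β, hβ⟩))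
    rw [q.2.1] at hd
    exact ⟨_, hd.trans hαβ, dTree_comm (α := α) (.inl _) (.inr q) ▸ hd.trans hαβ⟩

end TreeMetric

theorem stmt15_general {W T : Type*} [CompleteDistMonoid W] [PartialOrder T]
    (hW : ContinuousAtZero W)
    (κ : Ordinal)
    (lev : T → Ordinal) (ht : IsTree κ lev)
    (α : Ordinal → W) (hα : IsInitialSeq κ α) :
    IsWMetric (dTree (W := W) κ lev α) ∧
    CauchyComplete (dTree (W := W) κ lev α) ∧
    ∀ u : T ⊕ PathT κ lev, ∃ (A : Set W) (p : W → T ⊕ PathT κ lev),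
      IsCauchySeqOn (dTree κ lev α) A p ∧
      (∀ a ∈ A, ∃ t : T, p a = Sum.inl t) ∧
      ConvergesTo (dTree κ lev α) A p u := by
  have hd := dTree_isWMetric (W := W) ht hα
  refine ⟨hd, dTree_cauchyComplete hW ht hα, fun u => ?_⟩
  obtain ⟨A, p, hp, hpT, hu⟩ := exists_isCauchySeqOn_convergesTo_of_adherent hW hd
    (S := Set.range Sum.inl) fun c hc =>
      let ⟨t, htc⟩ := exists_inl_dTree_le ht hα u hc
      ⟨_, ⟨t, rfl⟩, htc⟩
  exact ⟨A, p, hp, fun a ha => (hpT a ha).elim fun t h => ⟨t, h.symm⟩, hu⟩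

/-- For a `κ`-tree `T` and a nice initial sequence `α` (with `2 • α (i+1) ≤ α i`), the
space `T_α = (T ∪ Paths(T), d_{T,α})` is a Cauchy complete `W`-metric space and `T` is
dense in it: every point is the limit of a Cauchy sequence with values in `T`. -/
theorem stmt15 {W T : Type*} [CompleteDistMonoid W] [PartialOrder T]
    (hW : ContinuousAtZero W)
    (κ : Ordinal) (hκ : Ordinal.omega0 ≤ κ)
    (lev : T → Ordinal) (ht : IsTree κ lev)
    (α : Ordinal → W) (hα : IsInitialSeq κ α)
    (hα2 : ∀ i, i < κ → 2 • α (i + 1) ≤ α i) :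
    IsWMetric (dTree (W := W) κ lev α) ∧
    CauchyComplete (dTree (W := W) κ lev α) ∧
    ∀ u : T ⊕ PathT κ lev, ∃ (A : Set W) (p : W → T ⊕ PathT κ lev),
      IsCauchySeqOn (dTree κ lev α) A p ∧
      (∀ a ∈ A, ∃ t : T, p a = Sum.inl t) ∧
      ConvergesTo (dTree κ lev α) A p u :=
  stmt15_general hW κ lev ht α hα
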